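/- Let S and A be finite nonempty sets, let p : S × A × S → ℝ satisfy p(s'|s,a) ≥ 0 and ∑_{s'} p(s'|s,a) = 1 for all (s,a), let r : S × A → ℝ, let γ ∈ [0,1), let π₀ : S × A → ℝ satisfy π₀(a|s) > 0 and ∑_a π₀(a|s) = 1 for every s, and let w > 0. Then the soft Bellman operator B_w[Q](s,a) = r(s,a) + γ·∑_{s'} p(s'|s,a)·w·log(∑_{a'} π₀(a'|s')·exp(Q(s',a')/w)) has a unique fixed point: there exists exactly one function Q*_w : S × A → ℝ such that B_w[Q*_w] = Q*_w. -/

import Mathlib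

/-- The soft (mellowmax) Bellman operator with transition kernel `p`, reward `r`,
discount `γ`, prior `π₀` and temperature `w`. -/
noncomputable def softBellman {S A : Type*} [Fintype S] [Fintype A]
    (p : S → A → S → ℝ) (r : S → A → ℝ) (γ : ℝ) (π₀ : S → A → ℝ) (w : ℝ)
    (Q : S → A → ℝ) : S → A → ℝ :=
  fun s a => r s a +
    γ * ∑ s', p s a s' * (w * Real.log (∑ a', π₀ s' a' * Real.exp (Q s' a' / w)))

/-!
Mellowmax is monotone and commutes with adding constants, so it is 1-Lipschitz for the sup
norm. Averaging over a probability vector is also 1-Lipschitz, hence the soft Bellman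
operator is a `γ`-contraction of the complete space `S → A → ℝ`, and Banach's fixed point
theorem applies.
-/

open Finset Real

noncomputable def mellowmax {A : Type*} [Fintype A] (ρ : A → ℝ) (w : ℝ) (f : A → ℝ) :
    ℝ :=
  w * log (∑ a, ρ a * exp (f a / w))

section Mellowmax

variable {A : Type*} [Fintype A] [Nonempty A] {ρ : A → ℝ} {w : ℝ}

lemma sum_mul_exp_pos (hρ : ∀ a, 0 < ρ a) (g : A → ℝ) : 0 < ∑ a, ρ a * exp (g a) :=
  sum_pos (fun a _ => mul_pos (hρ a) (exp_pos _)) univ_nonempty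

lemma mellowmax_add_const (hρ : ∀ a, 0 < ρ a) (hw : w ≠ 0) (f : A → ℝ) (c : ℝ) :
    mellowmax ρ w (fun a => f a + c) = mellowmax ρ w f + c := by
  have hsum : ∑ a, ρ a * exp ((f a + c) / w) = exp (c / w) * ∑ a, ρ a * exp (f a / w) := by
    rw [mul_sum]
    refine sum_congr rfl fun a _ => ?_
    rw [add_div, exp_add]
    ring
  rw [mellowmax, mellowmax, hsum, log_mul (exp_pos _).ne' (sum_mul_exp_pos hρ _).ne', log_exp,
    mul_add, mul_div_cancel₀ _ hw, add_comm c]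

lemma mellowmax_monotone (hρ : ∀ a, 0 < ρ a) (hw : 0 < w) : Monotone (mellowmax ρ w) := by
  intro f g hfg
  refine mul_le_mul_of_nonneg_left (log_le_log (sum_mul_exp_pos hρ _) ?_) hw.le
  gcongr with a
  · exact (hρ a).le
  · exact hfg a

lemma lipschitzWith_one_mellowmax (hρ : ∀ a, 0 < ρ a) (hw : 0 < w) :
    LipschitzWith 1 (mellowmax ρ w) :=
  LipschitzWith.of_le_add fun f g =>
    calc mellowmax ρ w f ≤ mellowmax ρ w (fun a => g a + dist f g) :=
          mellowmax_monotone hρ hw fun a => by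
            have hfg := dist_le_pi_dist f g a
            rw [Real.dist_eq] at hfg
            linarith [le_abs_self (f a - g a)]
      _ = mellowmax ρ w g + dist f g := mellowmax_add_const hρ hw.ne' g _

end Mellowmax

lemma abs_sum_mul_le_of_sum_eq_one {ι : Type*} [Fintype ι] {p u : ι → ℝ}
    (hp : ∀ i, 0 ≤ p i) (hp1 : ∑ i, p i = 1) {D : ℝ} (hu : ∀ i, |u i| ≤ D) :
    |∑ i, p i * u i| ≤ D :=
  calc |∑ i, p i * u i| ≤ ∑ i, p i * |u i| := by
        simpa only [abs_mul, abs_of_nonneg (hp _)] using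
          abs_sum_le_sum_abs (fun i => p i * u i) univ
    _ ≤ ∑ i, p i * D := sum_le_sum fun i _ => mul_le_mul_of_nonneg_left (hu i) (hp i)
    _ = D := by rw [← sum_mul, hp1, one_mul]

section SoftBellman

variable {S A : Type*} [Fintype S] [Fintype A]
  {p : S → A → S → ℝ} {r : S → A → ℝ} {γ : ℝ} {π₀ : S → A → ℝ} {w : ℝ}

lemma softBellman_apply (Q : S → A → ℝ) (s : S) (a : A) :
    softBellman p r γ π₀ w Q s a =
      r s a + γ * ∑ s', p s a s' * mellowmax (π₀ s') w (Q s') :=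
  rfl

lemma dist_softBellman_le [Nonempty A] (hp_nonneg : ∀ s a s', 0 ≤ p s a s')
    (hp_sum : ∀ s a, ∑ s', p s a s' = 1) (hγ0 : 0 ≤ γ) (hπpos : ∀ s a, 0 < π₀ s a)
    (hw : 0 < w) (Q Q' : S → A → ℝ) :
    dist (softBellman p r γ π₀ w Q) (softBellman p r γ π₀ w Q') ≤ γ * dist Q Q' := by
  have hmm (s' : S) :
      |mellowmax (π₀ s') w (Q s') - mellowmax (π₀ s') w (Q' s')| ≤ dist Q Q' := by
    have h := (lipschitzWith_one_mellowmax (hπpos s') hw).dist_le_mul (Q s') (Q' s')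
    rw [NNReal.coe_one, one_mul, Real.dist_eq] at h
    exact h.trans (dist_le_pi_dist Q Q' s')
  have hγd : 0 ≤ γ * dist Q Q' := mul_nonneg hγ0 dist_nonneg
  refine (dist_pi_le_iff hγd).2 fun s => (dist_pi_le_iff hγd).2 fun a => ?_
  calc dist (softBellman p r γ π₀ w Q s a) (softBellman p r γ π₀ w Q' s a)
      = γ * |∑ s', p s a s' *
          (mellowmax (π₀ s') w (Q s') - mellowmax (π₀ s') w (Q' s'))| := by
        simp_rw [Real.dist_eq, softBellman_apply, add_sub_add_left_eq_sub, ← mul_sub,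
          ← sum_sub_distrib, ← mul_sub, abs_mul, abs_of_nonneg hγ0]
    _ ≤ γ * dist Q Q' :=
        mul_le_mul_of_nonneg_left (abs_sum_mul_le_of_sum_eq_one (hp_nonneg s a) (hp_sum s a) hmm)
          hγ0

lemma contractingWith_softBellman [Nonempty A] (hp_nonneg : ∀ s a s', 0 ≤ p s a s')
    (hp_sum : ∀ s a, ∑ s', p s a s' = 1) (hγ0 : 0 ≤ γ) (hγ1 : γ < 1)
    (hπpos : ∀ s a, 0 < π₀ s a) (hw : 0 < w) :
    ContractingWith ⟨γ, hγ0⟩ (softBellman p r γ π₀ w) :=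
  ⟨by exact_mod_cast hγ1,
    LipschitzWith.of_dist_le_mul (dist_softBellman_le hp_nonneg hp_sum hγ0 hπpos hw)⟩

end SoftBellman

theorem softBellman_fixedPoint_existsUnique_general
    {S A : Type*} [Fintype S] [Fintype A] [Nonempty A]
    (p : S → A → S → ℝ) (hp_nonneg : ∀ s a s', 0 ≤ p s a s')
    (hp_sum : ∀ s a, ∑ s', p s a s' = 1)
    (r : S → A → ℝ) (γ : ℝ) (hγ0 : 0 ≤ γ) (hγ1 : γ < 1)
    (π₀ : S → A → ℝ) (hπpos : ∀ s a, 0 < π₀ s a)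
    (w : ℝ) (hw : 0 < w) :
    ∃! Qstar : S → A → ℝ, softBellman p r γ π₀ w Qstar = Qstar := by
  have hB := contractingWith_softBellman (r := r) hp_nonneg hp_sum hγ0 hγ1 hπpos hw
  exact ⟨hB.fixedPoint, hB.fixedPoint_isFixedPt, fun _ hQ => hB.fixedPoint_unique hQ⟩

/-- The soft Bellman operator has a unique fixed point. -/
theorem softBellman_fixedPoint_existsUnique
    {S A : Type*} [Fintype S] [Fintype A] [Nonempty S] [Nonempty A]
    (p : S → A → S → ℝ) (hp_nonneg : ∀ s a s', 0 ≤ p s a s')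
    (hp_sum : ∀ s a, ∑ s', p s a s' = 1)
    (r : S → A → ℝ) (γ : ℝ) (hγ0 : 0 ≤ γ) (hγ1 : γ < 1)
    (π₀ : S → A → ℝ) (hπpos : ∀ s a, 0 < π₀ s a) (hπsum : ∀ s, ∑ a, π₀ s a = 1)
    (w : ℝ) (hw : 0 < w) :
    ∃! Qstar : S → A → ℝ, softBellman p r γ π₀ w Qstar = Qstar :=
  softBellman_fixedPoint_existsUnique_general p hp_nonneg hp_sum r γ hγ0 hγ1 π₀ hπpos w hw
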